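/- Let x̄_t be a Markov process with càdlàg paths and possibly finite lifetime in E = ℝ^d ∖ {0}, d ≥ 2, with laws (P_x), let o = (0,…,0,1), and write ρ_t = |x̄_t| and ξ_t = x̄_t/|x̄_t|. Suppose Π is a Borel measure on E such that for every bounded continuous function f: E → ℝ vanishing on some neighborhood of o, the limit lim_{t→0+} E_o[f(x̄_t)]/t exists and equals Π(f) (where f is extended by 0 after the lifetime), and Π(f) is finite for all such f. If under P_o the processes (ρ_t) and (ξ_t) are independent, then Π is concentrated on R ∪ S^{d−1}, where R = {r·o : r > 0} and S^{d−1} is the unit sphere; that is, every point (r, θ) ∈ E with r = |x| ≠ 1 and θ = x/|x| ≠ o lies outside the support of Π. -/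

import Mathlib

open MeasureTheory ProbabilityTheory Filter Topology Pointwise

noncomputable section


/-- Euclidean space `ℝ^d`. -/
abbrev EV (d : ℕ) := EuclideanSpace ℝ (Fin d)

/-- The canonical path space.  The origin `0` serves as the cemetery point, so that a
càdlàg path in `E = ℝ^d ∖ {0}` with possibly finite lifetime is encoded as a function
`ℝ → ℝ^d` which is equal to `0` from its lifetime on. -/
abbrev EPath (d : ℕ) := ℝ → EV d

/-- The natural filtration of the coordinate process on path space. -/
def filt (d : ℕ) (t : ℝ) : MeasurableSpace (EPath d) :=
  ⨆ (s : ℝ) (_ : s ∈ Set.Icc 0 t), MeasurableSpace.comap (fun ω => ω s) inferInstance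

/-- The natural filtration of the radial part of the coordinate process. -/
def radFilt (d : ℕ) (t : ℝ) : MeasurableSpace (EPath d) :=
  ⨆ (s : ℝ) (_ : s ∈ Set.Icc 0 t), MeasurableSpace.comap (fun ω => ‖ω s‖) inferInstance

/-- `ω` is a càdlàg path in `E = ℝ^d ∖ {0}` with (possibly finite) lifetime:  the origin
`0` is an absorbing cemetery state, `ω t ≠ 0` means that `t` is strictly before the
lifetime, `ω` is right continuous and has left limits before its lifetime, and `ω` is
normalized to be constant on negative times. -/
def PathOK (d : ℕ) (ω : EPath d) : Prop :=
  (∀ t : ℝ, t < 0 → ω t = ω 0) ∧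
  (∀ s t : ℝ, 0 ≤ s → s ≤ t → ω s = 0 → ω t = 0) ∧
  (∀ t : ℝ, 0 ≤ t → ω t ≠ 0 → Filter.Tendsto ω (𝓝[>] t) (𝓝 (ω t))) ∧
  (∀ t : ℝ, 0 < t → ω t ≠ 0 → ∃ l, Filter.Tendsto ω (𝓝[<] t) (𝓝 l))

/-- A time homogeneous Markov process with values in `E = ℝ^d ∖ {0}`, with càdlàg paths
and possibly finite lifetime (`0` being the absorbing cemetery state), described by its
transition kernels `κ t` and its laws `law x` (the distribution of the process started at
`x`) on the canonical path space. -/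
structure MarkovFamily (d : ℕ) where
  law : EV d → Measure (EPath d)
  κ : ℝ → Kernel (EV d) (EV d)
  isProb : ∀ x, IsProbabilityMeasure (law x)
  start : ∀ x, law x {ω | ω 0 = x} = 1
  kernelMarkov : ∀ t, 0 ≤ t → IsMarkovKernel (κ t)
  absorbing : ∀ t, 0 ≤ t → κ t 0 = Measure.dirac 0
  cadlag : ∀ x, ∀ᵐ ω ∂(law x), PathOK d ω
  markov : ∀ x, ∀ t s : ℝ, 0 ≤ t → 0 ≤ s → ∀ A : Set (EPath d),
    MeasurableSet[filt d t] A → ∀ B : Set (EV d), MeasurableSet B →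
    law x (A ∩ (fun ω => ω (t + s)) ⁻¹' B) = ∫⁻ ω in A, κ s (ω t) B ∂(law x)

/-- The transition function is isotropic (`O(d)`-invariant):
`P_t(φ x, φ B) = P_t(x, B)` for every orthogonal transformation `φ`. -/
def Isotropic (d : ℕ) (κ : ℝ → Kernel (EV d) (EV d)) : Prop :=
  ∀ φ : EV d ≃ₗᵢ[ℝ] EV d, ∀ t : ℝ, 0 ≤ t → ∀ x : EV d, ∀ B : Set (EV d),
    MeasurableSet B → κ t (φ x) (φ '' B) = κ t x B

/-- The transition function is `α`-self-similar:
`P_{λ t}(x, B) = P_t(λ^{-α} x, λ^{-α} B)` for all `λ > 0`. -/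
def SelfSimilar (d : ℕ) (α : ℝ) (κ : ℝ → Kernel (EV d) (EV d)) : Prop :=
  ∀ lam : ℝ, 0 < lam → ∀ t : ℝ, 0 ≤ t → ∀ x : EV d, ∀ B : Set (EV d), MeasurableSet B →
    κ (lam * t) x B = κ t (lam ^ (-α) • x) (lam ^ (-α) • B)

/-- The Lamperti additive functional `A_t = ∫_0^t |x_s|^{-1/α} ds`. -/
def lampA (d : ℕ) (α : ℝ) (ω : EPath d) (t : ℝ) : ℝ :=
  ∫ s in (0:ℝ)..t, ‖ω s‖ ^ (-α⁻¹)

/-- The inverse `T_t = inf{s ≥ 0 : A_s ≥ t}` of the Lamperti additive functional. -/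
def lampT (d : ℕ) (α : ℝ) (ω : EPath d) (t : ℝ) : ℝ :=
  sInf {s : ℝ | 0 ≤ s ∧ t ≤ lampA d α ω s}

open Classical in
/-- The Lamperti time changed path `x̄_t = x_{T_t}`, defined for `t < A_{ζ-}` and sent to
the cemetery `0` afterwards. -/
def timeChanged (d : ℕ) (α : ℝ) (ω : EPath d) : EPath d := fun t =>
  if 0 ≤ t ∧ ∃ s : ℝ, 0 ≤ s ∧ ω s ≠ 0 ∧ t < lampA d α ω s then ω (lampT d α ω t) else 0


/-! Take a bump `f₁` in the radial variable around `|x|` and a bump `f₂` in the angular variable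
around `x/|x|`, both vanishing near `o`. Independence of `ρ` and `ξ` factors `E_o[(f₁ f₂)(x̄_t)]`
as `E_o[f₁(x̄_t)] E_o[f₂(x̄_t)]`; each factor is `O(t)`, so the product is `o(t)` and `Π(f₁ f₂) = 0`.
Since `f₁ f₂ ≥ 0` is positive at `x`, `Π` vanishes near `x`. -/

section Tent

variable {X : Type*} [PseudoMetricSpace X]

def tent (c : X) (r : ℝ) (y : X) : ℝ := max 0 (1 - dist y c / r)

theorem continuous_tent (c : X) (r : ℝ) : Continuous (tent c r) := by
  unfold tent; fun_prop

theorem tent_nonneg (c : X) (r : ℝ) (y : X) : 0 ≤ tent c r y := le_max_left _ _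

theorem tent_le_one {c : X} {r : ℝ} (hr : 0 ≤ r) (y : X) : tent c r y ≤ 1 :=
  max_le zero_le_one (sub_le_self _ (div_nonneg dist_nonneg hr))

@[simp]
theorem tent_self (c : X) (r : ℝ) : tent c r c = 1 := by simp [tent]

theorem tent_eq_zero_of_le_dist {c y : X} {r : ℝ} (hr : 0 < r) (h : r ≤ dist y c) :
    tent c r y = 0 :=
  max_eq_left (by rw [sub_nonpos, one_le_div hr]; exact h)

theorem ContinuousAt.eventually_tent_comp_eq_zero {Y : Type*} [TopologicalSpace Y] {φ : Y → X}
    {a : Y} (hφ : ContinuousAt φ a) {c : X} {r : ℝ} (hr : 0 < r) (hra : r < dist (φ a) c) :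
    ∀ᶠ y in 𝓝 a, tent c r (φ y) = 0 := by
  filter_upwards [(hφ.dist continuousAt_const).eventually (lt_mem_nhds hra)] with y hy
  exact tent_eq_zero_of_le_dist hr hy.le

end Tent

section TestFunction

variable {V : Type*} [TopologicalSpace V] [Zero V]

def IsTestFunction (o : V) (f : V → ℝ) : Prop :=
  ContinuousOn f {v | v ≠ 0} ∧ (∃ C, ∀ v, |f v| ≤ C) ∧ ∃ U ∈ 𝓝 o, ∀ y ∈ U, f y = 0

theorem IsTestFunction.mul {o : V} {f g : V → ℝ} (hf : IsTestFunction o f)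
    (hg : IsTestFunction o g) : IsTestFunction o (fun v => f v * g v) := by
  obtain ⟨hfc, ⟨C, hC⟩, U, hU, hfU⟩ := hf
  obtain ⟨hgc, ⟨D, hD⟩, -⟩ := hg
  refine ⟨hfc.mul hgc, ⟨C * D, fun v => ?_⟩, U, hU, fun y hy => by simp [hfU y hy]⟩
  rw [abs_mul]
  exact mul_le_mul (hC v) (hD v) (abs_nonneg _) ((abs_nonneg _).trans (hC v))

theorem isTestFunction_tent_comp [T1Space V] {o : V} (ho : o ≠ 0) {X : Type*} [MetricSpace X]
    {φ : V → X} (hφ : ContinuousOn φ {v | v ≠ 0}) {c : X} (hc : φ o ≠ c) :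
    IsTestFunction o (fun v => tent c (dist (φ o) c / 2) (φ v)) := by
  have hdist : 0 < dist (φ o) c := dist_pos.mpr hc
  refine ⟨(continuous_tent _ _).comp_continuousOn hφ, ⟨1, fun v => ?_⟩, ?_⟩
  · rw [abs_of_nonneg (tent_nonneg _ _ _)]
    exact tent_le_one (by positivity) _
  · exact eventually_iff_exists_mem.mp <| (hφ.continuousAt (isOpen_ne.mem_nhds ho))
      |>.eventually_tent_comp_eq_zero (by positivity) (by linarith)

end TestFunction

theorem tendsto_mul_div_of_tendsto_div {𝕜 : Type*} [NormedField 𝕜] {l : Filter 𝕜}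
    (hl : l ≤ 𝓝 0) {a b : 𝕜 → 𝕜} {α β : 𝕜} (ha : Tendsto (fun t => a t / t) l (𝓝 α))
    (hb : Tendsto (fun t => b t / t) l (𝓝 β)) : Tendsto (fun t => a t * b t / t) l (𝓝 0) := by
  have key : ∀ t, a t * b t / t = a t / t * (b t / t) * t := by
    intro t
    rcases eq_or_ne t 0 with rfl | ht
    · simp
    · field_simp
  simpa [key] using (ha.mul hb).mul (tendsto_id.mono_left hl)

theorem indicator_norm_comp {V : Type*} [NormedAddCommGroup V] (g : ℝ → ℝ) (v : V) :
    {v : V | v ≠ 0}.indicator (fun v => g ‖v‖) v = {r : ℝ | r ≠ 0}.indicator g ‖v‖ := by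
  by_cases hv : v = 0 <;> simp [hv]

section RadialAngular

variable {V : Type*} [NormedAddCommGroup V] [NormedSpace ℝ V]

theorem NormedSpace.continuousOn_normalize :
    ContinuousOn (NormedSpace.normalize : V → V) {v | v ≠ 0} :=
  (continuous_norm.continuousOn.inv₀ fun _ hv => norm_ne_zero_iff.mpr hv).smul continuousOn_id

theorem indicator_normalize_comp (h : V → ℝ) (v : V) :
    {v : V | v ≠ 0}.indicator (fun v => h (NormedSpace.normalize v)) v
      = {u : V | u ≠ 0}.indicator h (NormedSpace.normalize v) := by
  by_cases hv : v = 0 <;> simp [hv, NormedSpace.normalize_eq_zero_iff]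

variable [MeasurableSpace V] [BorelSpace V] [SecondCountableTopology V]

theorem NormedSpace.measurable_normalize : Measurable (NormedSpace.normalize : V → V) :=
  measurable_norm.inv.smul measurable_id

theorem integral_indicator_norm_mul_normalize {T : Type*} {μ : Measure (T → V)}
    (hind : IndepFun (fun ω t => ‖ω t‖) (fun ω t => NormedSpace.normalize (ω t)) μ)
    {g : ℝ → ℝ} {h : V → ℝ} (hg : Measurable g) (hh : Measurable h) (t : T) :
    ∫ ω, {v : V | v ≠ 0}.indicator (fun v => g ‖v‖ * h (NormedSpace.normalize v)) (ω t) ∂μ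
      = (∫ ω, {v : V | v ≠ 0}.indicator (fun v => g ‖v‖) (ω t) ∂μ)
        * ∫ ω, {v : V | v ≠ 0}.indicator (fun v => h (NormedSpace.normalize v)) (ω t) ∂μ := by
  simp only [Set.indicator_mul, indicator_norm_comp, indicator_normalize_comp]
  refine hind.integral_fun_comp_mul_comp (f := fun u => {r : ℝ | r ≠ 0}.indicator g (u t))
    (g := fun u => {u : V | u ≠ 0}.indicator h (u t)) ?_ ?_ ?_ ?_
  · exact (measurable_pi_lambda _ fun s => (measurable_pi_apply s).norm).aemeasurable
  · exact (measurable_pi_lambda _ fun s =>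
      NormedSpace.measurable_normalize.comp (measurable_pi_apply s)).aemeasurable
  · exact ((hg.indicator (measurableSet_singleton 0).compl).comp
      (measurable_pi_apply t)).aestronglyMeasurable
  · exact ((hh.indicator (measurableSet_singleton 0).compl).comp
      (measurable_pi_apply t)).aestronglyMeasurable

end RadialAngular

theorem exists_mem_nhds_measure_eq_zero_of_integral_eq_zero {X : Type*} [TopologicalSpace X]
    [MeasurableSpace X] {μ : Measure X} {f : X → ℝ} (hfi : Integrable f μ) (hf : 0 ≤ f)
    (h0 : ∫ y, f y ∂μ = 0) {x : X} (hx : ContinuousAt f x) (hpos : 0 < f x) :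
    ∃ U ∈ 𝓝 x, μ U = 0 := by
  have hae : f =ᵐ[μ] 0 := (integral_eq_zero_iff_of_nonneg hf hfi).mp h0
  exact ⟨{y | 0 < f y}, hx.eventually (lt_mem_nhds hpos),
    measure_mono_null (fun _ hy => ne_of_gt hy) (ae_iff.mp hae)⟩

/-- Proposition 1 of Liao–Wang, necessity half.  Let `x̄` be a Markov
process in `E = ℝ^d ∖ {0}` (`d ≥ 2`) with càdlàg paths and possibly finite lifetime, let
`o = (0, …, 0, 1)`, and write `ρ_t = |x̄_t|`, `ξ_t = x̄_t/|x̄_t|` for its radial and angular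
parts.  Suppose `Π` is a Borel measure on `E` such that for every bounded continuous
function `f : E → ℝ` vanishing on a neighborhood of `o`, the quantity `E_o[f(x̄_t)]/t`
(with `f` extended by `0` after the lifetime) converges as `t → 0+` to the finite value
`Π(f)`.  If under `P_o` the radial process and the angular process are independent, then
every point of `E` whose radial part differs from `1` and whose angular part differs from
`o` lies outside the support of `Π`; that is, `Π` is concentrated on `R ∪ S^{d-1}`. -/
theorem stmt4 (d : ℕ) (hd : 2 ≤ d) (M : MarkovFamily d)
    (o : EV d) (ho : o = EuclideanSpace.single (⟨d - 1, by omega⟩ : Fin d) (1 : ℝ))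
    (Lev : Measure (EV d))
    (hgen : ∀ f : EV d → ℝ, ContinuousOn f {v : EV d | v ≠ 0} → (∃ C : ℝ, ∀ v, |f v| ≤ C) →
      (∃ U ∈ 𝓝 o, ∀ y ∈ U, f y = 0) →
      Integrable f Lev ∧
      Filter.Tendsto
        (fun t : ℝ => (∫ ω, Set.indicator {v : EV d | v ≠ 0} f (ω t) ∂(M.law o)) / t)
        (𝓝[>] (0 : ℝ)) (𝓝 (∫ y, f y ∂Lev)))
    (hindep : IndepFun (fun ω : EPath d => fun t : ℝ => ‖ω t‖)
      (fun ω : EPath d => fun t : ℝ => ‖ω t‖⁻¹ • ω t) (M.law o)) :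
    ∀ x : EV d, x ≠ 0 → ‖x‖ ≠ 1 → ‖x‖⁻¹ • x ≠ o → ∃ U ∈ 𝓝 x, Lev U = 0 := by
  intro x hx0 hx1 hxo
  have hno : ‖o‖ = 1 := by simp [ho]
  have ho0 : o ≠ 0 := norm_ne_zero_iff.mp (by simp [hno])
  set f₁ := fun v : EV d => tent ‖x‖ (dist ‖o‖ ‖x‖ / 2) ‖v‖
  set f₂ := fun v : EV d => tent (NormedSpace.normalize x)
    (dist (NormedSpace.normalize o) (NormedSpace.normalize x) / 2) (NormedSpace.normalize v)
  have h₁ : IsTestFunction o f₁ :=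
    isTestFunction_tent_comp ho0 continuous_norm.continuousOn (by rw [hno]; exact hx1.symm)
  have h₂ : IsTestFunction o f₂ := isTestFunction_tent_comp ho0 NormedSpace.continuousOn_normalize
    (by rw [NormedSpace.normalize_eq_self_of_norm_eq_one hno]; exact hxo.symm)
  have h₁₂ := h₁.mul h₂
  obtain ⟨hint, hlim⟩ := hgen _ h₁₂.1 h₁₂.2.1 h₁₂.2.2
  have hzero : ∫ v, f₁ v * f₂ v ∂Lev = 0 := by
    refine tendsto_nhds_unique hlim ?_
    simp only [f₁, f₂, integral_indicator_norm_mul_normalize hindep (continuous_tent _ _).measurable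
      (continuous_tent _ _).measurable]
    exact tendsto_mul_div_of_tendsto_div nhdsWithin_le_nhds (hgen _ h₁.1 h₁.2.1 h₁.2.2).2
      (hgen _ h₂.1 h₂.2.1 h₂.2.2).2
  refine exists_mem_nhds_measure_eq_zero_of_integral_eq_zero hint
    (fun v => mul_nonneg (tent_nonneg _ _ _) (tent_nonneg _ _ _)) hzero
    (h₁₂.1.continuousAt (isOpen_ne.mem_nhds hx0)) ?_
  simp [f₁, f₂]
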